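/- For every ε > 0 there exists a unit vector ξ ∈ ℓ²(F₂) such that |⟨λ_x(ξ), ξ⟩| > √3/2 − ε for each x ∈ {a, a⁻¹, b, b⁻¹}, where λ is the left regular representation of the free group F₂ = ⟨a,b⟩. -/

import Mathlib

open scoped ENNReal

theorem memℓp_comp_equiv {α β : Type*} (e : α ≃ β) (f : α → ℂ) (hf : Memℓp f 2) :
    Memℓp (fun b => f (e.symm b)) 2 := by
  rw [memℓp_gen_iff (by norm_num : 0 < (2:ℝ≥0∞).toReal)] at hf ⊢
  exact (e.symm.summable_iff (f := fun a => ‖f a‖ ^ (2:ℝ≥0∞).toReal)).2 hf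

/-- Reindexing of `ℓ²` along an equivalence of index sets, as a linear isometric
equivalence: `f ↦ f ∘ e.symm`. -/
noncomputable def lpCongr {α β : Type*} (e : α ≃ β) :
    lp (fun _ : α => ℂ) 2 ≃ₗᵢ[ℂ] lp (fun _ : β => ℂ) 2 where
  toLinearEquiv :=
    { toFun := fun f => ⟨fun b => f (e.symm b), memℓp_comp_equiv e f (lp.memℓp f)⟩
      invFun := fun g => ⟨fun a => g (e a), by
        have h := memℓp_comp_equiv e.symm (g : β → ℂ) (lp.memℓp g)
        simp only [Equiv.symm_symm] at h
        exact h⟩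
      map_add' := by intro f g; ext b; rfl
      map_smul' := by intro c f; ext b; rfl
      left_inv := by intro f; ext a; simp
      right_inv := by intro g; ext b; simp }
  norm_map' := by
    intro f
    have h2 : 0 < (2:ℝ≥0∞).toReal := by norm_num
    rw [lp.norm_eq_tsum_rpow h2, lp.norm_eq_tsum_rpow h2]
    congr 1
    exact e.symm.tsum_eq (f := fun a => ‖f a‖ ^ (2:ℝ≥0∞).toReal)

variable {Γ : Type*} [Group Γ]

/-- The left regular representation of a group `Γ` on `ℓ²(Γ)`:
`lam x` maps `δ_t` to `δ_{x t}`, i.e. `(lam x f) s = f (x⁻¹ * s)`. -/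
noncomputable def lam (x : Γ) :
    lp (fun _ : Γ => ℂ) 2 ≃ₗᵢ[ℂ] lp (fun _ : Γ => ℂ) 2 :=
  lpCongr (Equiv.mulLeft x)

/-- The left regular representation, as a continuous linear map on `ℓ²(Γ)`. -/
noncomputable def lamCLM (x : Γ) :
    lp (fun _ : Γ => ℂ) 2 →L[ℂ] lp (fun _ : Γ => ℂ) 2 :=
  ((lam x).toContinuousLinearEquiv : lp (fun _ : Γ => ℂ) 2 ≃L[ℂ] lp (fun _ : Γ => ℂ) 2)

/-!
Let `k` be the rank of the free group, `r = 2k - 1` (so `r = 3` for `F₂`) and `t = √r`. A reduced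
word of length `i + 1` is a first letter followed by `i` letters, each avoiding the inverse of its
predecessor, so the sphere `S (i + 1)` has `2k r^i` elements, `r^i` of them starting with a given
letter `l`. Left multiplication by `l⁻¹` moves `w ∈ S i` to `S (i - 1)` if `w` starts with `l` and
to `S (i + 1)` otherwise. Hence a radial vector `ξ w = φ |w|` has `‖ξ‖² = ∑ |S i| φ(i)²` and
`⟪λ_l ξ, ξ⟫ = 2 ∑ r^i φ(i) φ(i + 1)`. For `φ i = t^{-i}` on `1 ≤ i ≤ n + 1` these are
`2k (n + 1) / t²` and `2n / t`, so after normalising `⟪λ_l ξ, ξ⟫ = n t / (k (n + 1))`, which tends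
to `√3 / 2` when `k = 2`.
-/

theorem lam_apply (x : Γ) (f : lp (fun _ : Γ => ℂ) 2) (w : Γ) : lam x f w = f (x⁻¹ * w) := rfl

theorem exists_norm_eq_one_inner_lam_eq_div {ξ : lp (fun _ : Γ => ℂ) 2} (hξ : ξ ≠ 0) :
    ∃ u : lp (fun _ : Γ => ℂ) 2, ‖u‖ = 1 ∧
      ∀ x : Γ, inner ℂ (lam x u) u = inner ℂ (lam x ξ) ξ / ((‖ξ‖ ^ 2 : ℝ) : ℂ) := by
  refine ⟨((‖ξ‖ : ℂ))⁻¹ • ξ, norm_smul_inv_norm hξ, fun x => ?_⟩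
  have : (‖ξ‖ : ℂ) ≠ 0 := by simpa using hξ
  rw [map_smul, inner_smul_left, inner_smul_right, map_inv₀, Complex.conj_ofReal]
  push_cast
  field_simp

open Finset

noncomputable def geometricWeight (t : ℝ) (N i : ℕ) : ℝ :=
  if i = 0 ∨ N < i then 0 else t⁻¹ ^ i

theorem geometricWeight_eq_zero (t : ℝ) {N : ℕ} (i : ℕ) (hi : N < i) :
    geometricWeight t N i = 0 :=
  if_pos (Or.inr hi)

theorem geometricWeight_of_le (t : ℝ) {N i : ℕ} (h₀ : i ≠ 0) (hi : i ≤ N) :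
    geometricWeight t N i = t⁻¹ ^ i :=
  if_neg (by omega)

namespace FreeGroup

variable {α : Type*}

theorem inv_mk_singleton (l : α × Bool) : (mk [l])⁻¹ = mk [(l.1, !l.2)] := by
  simp [inv_mk, invRev]

variable [DecidableEq α]

theorem toWord_mk_singleton_mul (l : α × Bool) (w : FreeGroup α) :
    (mk [l] * w).toWord =
      if w.toWord.head? = some (l.1, !l.2) then w.toWord.tail else l :: w.toWord := by
  rw [← mk_toWord (x := w), mul_mk, toWord_mk, List.singleton_append, reduce.cons,
    ← toWord_mk, mk_toWord]
  rcases w.toWord with _ | ⟨m, t⟩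
  · rfl
  · obtain ⟨a, b⟩ := l
    obtain ⟨c, d⟩ := m
    simp only [List.head?_cons, Option.some.injEq, Prod.mk.injEq, List.tail_cons]
    congr 1
    cases b <;> cases d <;> simp [eq_comm]

theorem norm_mk_singleton_mul (l : α × Bool) (w : FreeGroup α) :
    (mk [l] * w).norm =
      if w.toWord.head? = some (l.1, !l.2) then w.norm - 1 else w.norm + 1 := by
  simp only [norm, toWord_mk_singleton_mul]
  split_ifs <;> simp

theorem head?_tail_toWord_ne {l : α × Bool} {w : FreeGroup α}
    (h : w.toWord.head? = some l) : w.toWord.tail.head? ≠ some (l.1, !l.2) := by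
  have hred := isReduced_toWord (x := w)
  rcases hw : w.toWord with _ | ⟨m, _ | ⟨m', t⟩⟩ <;> simp_all [isReduced_cons_cons]
  obtain ⟨rfl⟩ := h
  intro hm
  subst hm
  simp at hred

variable [Fintype α]

noncomputable def sphere (i : ℕ) : Finset (FreeGroup α) :=
  ((List.finite_length_eq (α × Bool) i).preimage toWord_injective.injOn).toFinset

@[simp]
theorem mem_sphere {i : ℕ} {w : FreeGroup α} : w ∈ sphere i ↔ w.norm = i := by
  simp [sphere, norm]

theorem sphere_zero : sphere 0 = ({1} : Finset (FreeGroup α)) := by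
  ext; simp [norm_eq_zero]

theorem card_filter_head?_eq_succ (l : α × Bool) (i : ℕ) :
    #{w ∈ sphere (i + 1) | w.toWord.head? = some l} =
      #{w ∈ sphere i | w.toWord.head? ≠ some (l.1, !l.2)} := by
  refine card_nbij' (mk [(l.1, !l.2)] * ·) (mk [l] * ·) ?_ ?_ ?_ ?_
  · intro u hu
    simp only [coe_filter, mem_sphere, Set.mem_ofPred_eq] at hu ⊢
    have hcancel : (mk [(l.1, !l.2)] * u).toWord = u.toWord.tail := by
      simp [toWord_mk_singleton_mul, hu.2]
    refine ⟨by rw [norm, hcancel, List.length_tail, ← norm, hu.1, Nat.add_sub_cancel], ?_⟩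
    rw [hcancel]
    exact head?_tail_toWord_ne hu.2
  · intro w hw
    simp only [coe_filter, mem_sphere, Set.mem_ofPred_eq] at hw ⊢
    have hextend : (mk [l] * w).toWord = l :: w.toWord := by
      simp [toWord_mk_singleton_mul, hw.2]
    simp [norm, hextend, ← hw.1]
  · intro u _
    dsimp only
    rw [← mul_assoc, ← inv_mk_singleton, mul_inv_cancel, one_mul]
  · intro w _
    dsimp only
    rw [← mul_assoc, ← inv_mk_singleton, inv_mul_cancel, one_mul]

theorem card_sphere_succ_eq_sum (i : ℕ) :
    #(sphere (i + 1) : Finset (FreeGroup α)) =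
      ∑ l : α × Bool, #{w ∈ sphere (i + 1) | w.toWord.head? = some l} := by
  rw [card_eq_sum_card_fiberwise (f := fun w => w.toWord.head?)
      (t := (univ : Finset (Option (α × Bool)))) (fun _ _ => mem_univ _),
    Fintype.sum_option, add_eq_right, card_eq_zero, filter_eq_empty_iff]
  intro w hw hnil
  rw [List.head?_eq_none_iff, toWord_eq_nil_iff] at hnil
  simp [hnil] at hw

theorem card_filter_head?_eq (l : α × Bool) (i : ℕ) :
    #{w ∈ sphere (i + 1) | w.toWord.head? = some l} = (2 * Fintype.card α - 1) ^ i := by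
  induction i generalizing l with
  | zero => simp [card_filter_head?_eq_succ, sphere_zero, filter_singleton]
  | succ i ih =>
    rw [card_filter_head?_eq_succ, filter_not, card_sdiff_of_subset (filter_subset _ _),
      card_sphere_succ_eq_sum]
    simp only [ih, sum_const, card_univ, Fintype.card_prod, Fintype.card_bool,
      smul_eq_mul, pow_succ']
    rw [mul_comm (Fintype.card α), ← tsub_one_mul, mul_comm]

theorem card_sphere_succ (i : ℕ) :
    #(sphere (i + 1) : Finset (FreeGroup α)) =
      2 * Fintype.card α * (2 * Fintype.card α - 1) ^ i := by
  simp [card_sphere_succ_eq_sum, card_filter_head?_eq, mul_comm]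

theorem card_filter_head?_ne (l : α × Bool) (i : ℕ) :
    #{w ∈ sphere i | w.toWord.head? ≠ some l} = (2 * Fintype.card α - 1) ^ i := by
  simpa using (card_filter_head?_eq_succ (l.1, !l.2) i).symm.trans (card_filter_head?_eq _ i)

theorem finite_setOf_norm_le (n : ℕ) : {w : FreeGroup α | w.norm ≤ n}.Finite :=
  (List.finite_length_le (α × Bool) n).preimage toWord_injective.injOn

theorem tsum_eq_sum_sum_sphere {M : Type*} [AddCommMonoid M] [TopologicalSpace M]
    {F : FreeGroup α → M} {n : ℕ} (hF : ∀ w, n < w.norm → F w = 0) :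
    ∑' w, F w = ∑ i ∈ range (n + 1), ∑ w ∈ sphere i, F w := by
  rw [← sum_biUnion]
  · refine tsum_eq_sum fun w hw => hF w ?_
    simpa [Nat.lt_succ_iff] using hw
  · intro i _ j _ hij
    exact disjoint_left.2 fun w hi hj => hij ((mem_sphere.1 hi).symm.trans (mem_sphere.1 hj))

noncomputable def radialVec (φ : ℕ → ℝ) {n : ℕ} (hφ : ∀ i, n < i → φ i = 0) :
    lp (fun _ : FreeGroup α => ℂ) 2 :=
  ⟨fun w => φ w.norm, (memℓp_zero <| (finite_setOf_norm_le n).subset fun w hw =>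
    Set.mem_ofPred.2 <| not_lt.1 fun hn => hw (by simp [hφ _ hn])).of_exponent_ge zero_le⟩

variable {φ : ℕ → ℝ} {n : ℕ} (hφ : ∀ i, n < i → φ i = 0)

theorem radialVec_apply (w : FreeGroup α) : radialVec φ hφ w = φ w.norm := rfl

theorem inner_radialVec (η : lp (fun _ : FreeGroup α => ℂ) 2) :
    inner ℂ η (radialVec φ hφ) =
      ∑ i ∈ range (n + 1), ∑ w ∈ sphere i, φ i * (starRingEnd ℂ) (η w) := by
  rw [lp.inner_eq_tsum, tsum_eq_sum_sum_sphere (n := n) fun w hw => by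
    simp [radialVec, RCLike.inner_apply, hφ _ hw]]
  refine sum_congr rfl fun i _ => sum_congr rfl fun w hw => ?_
  simp [radialVec, RCLike.inner_apply, mem_sphere.1 hw]

theorem inner_radialVec_self :
    inner ℂ (radialVec (α := α) φ hφ) (radialVec φ hφ) =
      ((∑ i ∈ range (n + 1), #(sphere i : Finset (FreeGroup α)) * φ i ^ 2 : ℝ) : ℂ) := by
  rw [inner_radialVec]
  push_cast
  refine sum_congr rfl fun i _ => ?_
  rw [sum_congr rfl fun w hw => by rw [radialVec_apply, mem_sphere.1 hw], sum_const,
    nsmul_eq_mul, Complex.conj_ofReal]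
  ring

theorem lam_mk_singleton_radialVec_apply (l : α × Bool) (w : FreeGroup α) :
    lam (mk [l]) (radialVec φ hφ) w =
      if w.toWord.head? = some l then φ (w.norm - 1) else φ (w.norm + 1) := by
  rw [lam_apply, radialVec_apply, inv_mk_singleton, norm_mk_singleton_mul, Bool.not_not]
  split_ifs <;> rfl

theorem inner_lam_mk_singleton_radialVec (l : α × Bool) :
    inner ℂ (lam (mk [l]) (radialVec φ hφ)) (radialVec φ hφ) =
      ((2 * ∑ i ∈ range n, ((2 * Fintype.card α - 1) ^ i : ℕ) * (φ i * φ (i + 1)) : ℝ) : ℂ) := by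
  have hsphere (i : ℕ) :
      ∑ w ∈ sphere i, φ i * (starRingEnd ℂ) (lam (mk [l]) (radialVec φ hφ) w) =
      ((#{w ∈ sphere i | w.toWord.head? = some l} * (φ (i - 1) * φ i) +
        ((2 * Fintype.card α - 1) ^ i : ℕ) * (φ i * φ (i + 1)) : ℝ) : ℂ) := by
    rw [← card_filter_head?_ne l i]
    have hsummand : ∀ w ∈ sphere i, φ i * (starRingEnd ℂ) (lam (mk [l]) (radialVec φ hφ) w) =
        if w.toWord.head? = some l then ((φ (i - 1) * φ i : ℝ) : ℂ)
        else ((φ i * φ (i + 1) : ℝ) : ℂ) := by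
      intro w hw
      rw [lam_mk_singleton_radialVec_apply, mem_sphere.1 hw]
      split_ifs <;> simp [Complex.conj_ofReal, mul_comm]
    rw [sum_congr rfl hsummand, sum_ite, sum_const, sum_const]
    push_cast
    simp [nsmul_eq_mul]
  rw [inner_radialVec, sum_congr rfl fun i _ => hsphere i, ← Complex.ofReal_sum]
  congr 1
  -- no word of length `0` has a first letter, and `φ (n + 1) = 0`: both boundary terms vanish
  rw [sum_add_distrib, sum_range_succ', sum_range_succ _ n]
  simp [card_filter_head?_eq, sphere_zero, filter_singleton, hφ (n + 1) (lt_add_one n)]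
  ring


section geometricWeight

variable {t : ℝ} (ht : t ≠ 0) (htr : ((2 * Fintype.card α - 1 : ℕ) : ℝ) = t ^ 2) (n : ℕ)
include ht htr

theorem inner_radialVec_geometricWeight_self :
    inner ℂ (radialVec (α := α) (geometricWeight t (n + 1)) (geometricWeight_eq_zero t))
        (radialVec (geometricWeight t (n + 1)) (geometricWeight_eq_zero t)) =
      ((2 * Fintype.card α * (n + 1) / t ^ 2 : ℝ) : ℂ) := by
  rw [inner_radialVec_self, sum_range_succ']
  congr 1
  have hterm : ∀ i ∈ range (n + 1), (#(sphere (i + 1) : Finset (FreeGroup α)) : ℝ) *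
      geometricWeight t (n + 1) (i + 1) ^ 2 = 2 * Fintype.card α / t ^ 2 := by
    intro i hi
    rw [geometricWeight_of_le t i.add_one_ne_zero (by simpa using hi), card_sphere_succ,
      Nat.cast_mul, Nat.cast_pow, htr, inv_pow]
    push_cast
    field_simp
    ring
  rw [sum_congr rfl hterm]
  simp [geometricWeight]
  ring

theorem inner_lam_mk_singleton_radialVec_geometricWeight (l : α × Bool) :
    inner ℂ (lam (mk [l]) (radialVec (geometricWeight t (n + 1)) (geometricWeight_eq_zero t)))
        (radialVec (geometricWeight t (n + 1)) (geometricWeight_eq_zero t)) =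
      ((2 * n / t : ℝ) : ℂ) := by
  rw [inner_lam_mk_singleton_radialVec, sum_range_succ']
  congr 1
  have hterm : ∀ i ∈ range n, (((2 * Fintype.card α - 1) ^ (i + 1) : ℕ) : ℝ) *
      (geometricWeight t (n + 1) (i + 1) * geometricWeight t (n + 1) (i + 1 + 1)) = t⁻¹ := by
    intro i hi
    rw [mem_range] at hi
    rw [geometricWeight_of_le t i.add_one_ne_zero (by omega),
      geometricWeight_of_le t (i + 1).add_one_ne_zero (by omega), Nat.cast_pow, htr, inv_pow,
      inv_pow]
    field_simp
    ring
  rw [sum_congr rfl hterm]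
  simp [geometricWeight]
  ring

end geometricWeight

theorem exists_norm_eq_one_inner_lam_mk_singleton_eq [Nonempty α] (n : ℕ) :
    ∃ ξ : lp (fun _ : FreeGroup α => ℂ) 2, ‖ξ‖ = 1 ∧ ∀ l : α × Bool,
      inner ℂ (lam (mk [l]) ξ) ξ =
        ((n * √(2 * Fintype.card α - 1) / (Fintype.card α * (n + 1)) : ℝ) : ℂ) := by
  have hk : 1 ≤ Fintype.card α := Fintype.card_pos
  have hk' : (1 : ℝ) ≤ Fintype.card α := by exact_mod_cast hk
  set t := √(2 * Fintype.card α - 1 : ℝ)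
  have ht : 0 < t := Real.sqrt_pos.2 (by linarith)
  have htr : ((2 * Fintype.card α - 1 : ℕ) : ℝ) = t ^ 2 := by
    rw [Real.sq_sqrt (by linarith), Nat.cast_sub (by omega)]
    push_cast
    ring
  set ξ₀ := radialVec (α := α) (geometricWeight t (n + 1)) (geometricWeight_eq_zero t)
  have hnorm : ‖ξ₀‖ ^ 2 = 2 * Fintype.card α * (n + 1) / t ^ 2 := by
    rw [@norm_sq_eq_re_inner ℂ, inner_radialVec_geometricWeight_self ht.ne' htr,
      RCLike.re_to_complex, Complex.ofReal_re]
  have hne : ξ₀ ≠ 0 := by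
    intro h
    rw [h, norm_zero, zero_pow two_ne_zero] at hnorm
    exact (by positivity : (0 : ℝ) < 2 * Fintype.card α * (n + 1) / t ^ 2).ne hnorm
  obtain ⟨ξ, hξ1, hξ⟩ := exists_norm_eq_one_inner_lam_eq_div hne
  refine ⟨ξ, hξ1, fun l => ?_⟩
  rw [hξ, inner_lam_mk_singleton_radialVec_geometricWeight ht.ne' htr, hnorm,
    ← Complex.ofReal_div]
  congr 1
  field_simp

end FreeGroup

/-- For every `ε > 0` there is a unit vector `ξ ∈ ℓ²(F₂)` such that
`|⟨λ_x ξ, ξ⟩| > √3/2 − ε` for each `x ∈ {a, a⁻¹, b, b⁻¹}`, where `λ` is the left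
regular representation of the free group `F₂ = ⟨a, b⟩`. -/
theorem exists_unit_vector_almost_invariant_freeGroup (ε : ℝ) (hε : 0 < ε) :
    ∃ ξ : lp (fun _ : FreeGroup (Fin 2) => ℂ) 2, ‖ξ‖ = 1 ∧
      ∀ x ∈ ({FreeGroup.of 0, (FreeGroup.of 0)⁻¹,
              FreeGroup.of 1, (FreeGroup.of 1)⁻¹} : Set (FreeGroup (Fin 2))),
        Real.sqrt 3 / 2 - ε < ‖(inner ℂ ((lam x) ξ) ξ : ℂ)‖ := by
  obtain ⟨n, hn⟩ := exists_nat_gt (√3 / (2 * ε))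
  obtain ⟨ξ, hξ, hinner⟩ := FreeGroup.exists_norm_eq_one_inner_lam_mk_singleton_eq (α := Fin 2) n
  refine ⟨ξ, hξ, fun x hx => ?_⟩
  obtain ⟨l, rfl⟩ : ∃ l : Fin 2 × Bool, x = FreeGroup.mk [l] := by
    rcases hx with rfl | rfl | rfl | rfl
    exacts [⟨_, rfl⟩, ⟨_, FreeGroup.inv_mk_singleton (0, true)⟩, ⟨_, rfl⟩,
      ⟨_, FreeGroup.inv_mk_singleton (1, true)⟩]
  have hε' : √3 / (2 * (n + 1)) < ε := by
    rw [div_lt_iff₀ (by positivity)] at hn ⊢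
    nlinarith
  rw [hinner, Complex.norm_real, Real.norm_of_nonneg (by positivity), Fintype.card_fin,
    Nat.cast_ofNat, show (2 * 2 - 1 : ℝ) = 3 by norm_num]
  calc √3 / 2 - ε < √3 / 2 - √3 / (2 * (n + 1)) := by linarith
    _ = n * √3 / (2 * (n + 1)) := by field_simp; ring
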